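/- arXiv:1903.01459 — 3 statements merged into one kernel-verified Lean document; each statement's English description precedes it below -/
import Mathlib

section
/- Identification of nonparametric regression curves under the normalization constraint (analytic core of Proposition 1): Let X be a real random variable on a probability space, taking values in [0,1], whose law has a density f with respect to Lebesgue measure satisfying f(x) ≥ c for Lebesgue-almost every x ∈ [0,1], for some constant c > 0. Let m, m̃ : [0,1] → ℝ be continuous functions, and let U, Ũ be integrable real random variables with E[U | X] = 0 almost surely and E[Ũ | X] = 0 almost surely. If m(X) + U = m̃(X) + Ũ almost surely, then m(x) = m̃(x) for all x ∈ [0,1]. -/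
open MeasureTheory

/-! A function of `X` with conditional mean zero given `X` must vanish: `m(X) - m'(X) = U' - U` is
`σ(X)`-measurable, so it equals its own conditional expectation, which is `0`. Hence `m = m'`
almost everywhere for the law of `X`, hence Lebesgue-a.e. on `[0,1]` because the density is
bounded below there, hence everywhere on `[0,1]` by continuity. -/

namespace MeasureTheory

theorem ae_eq_zero_of_ae_eq_of_condExp_eq_zero {Ω : Type*} {m m₀ : MeasurableSpace Ω}
    {μ : Measure[m₀] Ω} (hm : m ≤ m₀) [SigmaFinite (μ.trim hm)] {V W : Ω → ℝ}
    (hV : StronglyMeasurable[m] V) (hW : Integrable W μ) (hVW : V =ᵐ[μ] W)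
    (hW0 : μ[W | m] =ᵐ[μ] 0) : V =ᵐ[μ] 0 :=
  calc V = μ[V | m] := (condExp_of_stronglyMeasurable hm hV (hW.congr hVW.symm)).symm
    _ =ᵐ[μ] μ[W | m] := condExp_congr_ae hVW
    _ =ᵐ[μ] 0 := hW0

theorem Measure.restrict_absolutelyContinuous_withDensity_of_ae_le {α : Type*} [MeasurableSpace α]
    {μ : Measure α} {s : Set α} {ρ : α → ENNReal} {c : ENNReal} (hc : c ≠ 0)
    (hρ : ∀ᵐ x ∂μ.restrict s, c ≤ ρ x) : μ.restrict s ≪ μ.withDensity ρ := by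
  refine Measure.AbsolutelyContinuous.mk fun t ht ht0 => ?_
  have hle : c * μ.restrict s t ≤ μ.withDensity ρ t :=
    calc c * μ.restrict s t = ∫⁻ _ in t, c ∂μ.restrict s := (setLIntegral_const t c).symm
      _ ≤ ∫⁻ x in t, ρ x ∂μ.restrict s := lintegral_mono_ae (ae_restrict_of_ae hρ)
      _ ≤ ∫⁻ x in t, ρ x ∂μ := lintegral_mono' (Measure.restrict_mono le_rfl
          Measure.restrict_le_self) le_rfl
      _ = μ.withDensity ρ t := (withDensity_apply ρ ht).symm
  rw [ht0, nonpos_iff_eq_zero, mul_eq_zero] at hle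
  exact hle.resolve_left hc

end MeasureTheory

/-- **Identification of nonparametric regression curves (analytic core of Proposition 1).**
Let `X` be a random variable with values in `[0,1]` whose law has a Lebesgue density `f`
bounded below by `c > 0` a.e. on `[0,1]`. If `m, m'` are continuous on `[0,1]`, `U, U'` are
integrable with `E[U | X] = 0` and `E[U' | X] = 0` a.s., and `m(X) + U = m'(X) + U'` a.s.,
then `m = m'` on all of `[0,1]`. -/
theorem identification_of_regression_curves
    {Ω : Type*} [MeasurableSpace Ω] (μ : Measure Ω) [IsProbabilityMeasure μ]
    (X : Ω → ℝ) (hX : Measurable X) (hXrange : ∀ ω, X ω ∈ Set.Icc (0 : ℝ) 1)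
    (f : ℝ → ℝ) (c : ℝ) (hc : 0 < c)
    (hdens : Measure.map X μ = volume.withDensity (fun x => ENNReal.ofReal (f x)))
    (hlb : ∀ᵐ x ∂(volume.restrict (Set.Icc (0 : ℝ) 1)), c ≤ f x)
    (m m' : ℝ → ℝ)
    (hm : ContinuousOn m (Set.Icc (0 : ℝ) 1)) (hm' : ContinuousOn m' (Set.Icc (0 : ℝ) 1))
    (U U' : Ω → ℝ) (hU : Integrable U μ) (hU' : Integrable U' μ)
    (hcondU : μ[U | MeasurableSpace.comap X Real.measurableSpace] =ᵐ[μ] 0)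
    (hcondU' : μ[U' | MeasurableSpace.comap X Real.measurableSpace] =ᵐ[μ] 0)
    (heq : ∀ᵐ ω ∂μ, m (X ω) + U ω = m' (X ω) + U' ω) :
    ∀ x ∈ Set.Icc (0 : ℝ) 1, m x = m' x := by
  set g : ℝ → ℝ := Set.IccExtend zero_le_one ((Set.Icc (0 : ℝ) 1).domRestrict (m - m'))
  have hg : Continuous g := (hm.sub hm').domRestrict.Icc_extend'
  have hg_eq : ∀ x ∈ Set.Icc (0 : ℝ) 1, g x = m x - m' x := fun x hx =>
    Set.IccExtend_of_mem _ _ hx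
  have hnoise : μ[U' - U | MeasurableSpace.comap X Real.measurableSpace] =ᵐ[μ] 0 := by
    filter_upwards [condExp_sub hU' hU (MeasurableSpace.comap X Real.measurableSpace), hcondU, hcondU'] with ω h h₀ h₀'
    simp only [h, Pi.sub_apply, h₀, h₀', Pi.zero_apply, sub_self]
  have hgX : g ∘ X =ᵐ[μ] 0 := by
    refine ae_eq_zero_of_ae_eq_of_condExp_eq_zero hX.comap_le
      (hg.measurable.comp (comap_measurable X)).stronglyMeasurable (hU'.sub hU) ?_ hnoise
    filter_upwards [heq] with ω hω
    simp only [Function.comp_apply, Pi.sub_apply, hg_eq _ (hXrange ω)]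
    linarith
  have hlaw : ∀ᵐ x ∂μ.map X, g x = 0 :=
    (ae_map_iff hX.aemeasurable (measurableSet_eq_fun hg.measurable measurable_const)).2 hgX
  rw [hdens] at hlaw
  have hleb : ∀ᵐ x ∂volume.restrict (Set.Icc (0 : ℝ) 1), g x = 0 :=
    Measure.restrict_absolutelyContinuous_withDensity_of_ae_le (ENNReal.ofReal_pos.2 hc).ne'
      (hlb.mono fun x hx => ENNReal.ofReal_le_ofReal hx) hlaw
  refine Measure.eqOn_Icc_of_ae_eq volume zero_ne_one ?_ hm hm'
  filter_upwards [hleb, ae_restrict_mem measurableSet_Icc] with x hx hmem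
  rw [← sub_eq_zero, ← hg_eq x hmem, hx]
end

section
/- Deterministic core of Theorem 1(a) (exact recovery by complete-linkage HAC under separation): Let n ≥ 1 be an integer, d : {1,…,n}² → ℝ symmetric, and let {G₁,…,G_{K₀}} be a partition of {1,…,n} into K₀ nonempty groups that is d-separated. Then, for every choice of tie-breaking at each step, the HAC partition P^{n−K₀} into K₀ clusters satisfies P^{n−K₀} = {G₁,…,G_{K₀}}. -/
/-!
Along any HAC run, as long as there are more clusters than groups, the clusters form a partition
refining the groups. Indeed, by pigeonhole two distinct clusters lie in a common group, and by
separation their linkage is smaller than that of any pair of clusters lying in different groups;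
so the pair merged by complete linkage lies in one group. After `n - K₀` merges there are `K₀`
clusters, and a partition refining the `K₀` groups with no more blocks than them is the group
partition itself.
-/

open Finset

/-- Complete-linkage dissimilarity `Δ(S,S') = max_{i ∈ S, j ∈ S'} d i j`, as an
extended real (so that the value over an empty index set is `⊥`). -/
noncomputable def cLink {n : ℕ} (d : Fin n → Fin n → ℝ) (S S' : Finset (Fin n)) : EReal :=
  sSup {x : EReal | ∃ i ∈ S, ∃ j ∈ S', x = (d i j : EReal)}

/-- Within-cluster dissimilarity `Δ(C) = max_{i,j ∈ C, i ≠ j} d i j`, as an extended real;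
for a singleton (or empty) cluster the value is `⊥`, which is smaller than every real. -/
noncomputable def cDiam {n : ℕ} (d : Fin n → Fin n → ℝ) (C : Finset (Fin n)) : EReal :=
  sSup {x : EReal | ∃ i ∈ C, ∃ j ∈ C, i ≠ j ∧ x = (d i j : EReal)}

/-- The initial partition of `{1,…,n}` into `n` singleton clusters. -/
def singletonPartition (n : ℕ) : Finset (Finset (Fin n)) :=
  Finset.univ.image fun i : Fin n => ({i} : Finset (Fin n))

/-- `Q` is obtained from `P` by merging one pair of distinct clusters attaining the
minimum of the complete-linkage dissimilarity `Δ` over all pairs of distinct clusters. -/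
def IsMergeStep {n : ℕ} (d : Fin n → Fin n → ℝ) (P Q : Finset (Finset (Fin n))) : Prop :=
  ∃ C ∈ P, ∃ C' ∈ P, C ≠ C' ∧
    (∀ D ∈ P, ∀ D' ∈ P, D ≠ D' → cLink d C C' ≤ cLink d D D') ∧
    Q = insert (C ∪ C') ((P.erase C).erase C')

/-- A run of the complete-linkage HAC algorithm (with an arbitrary choice of
tie-breaking at each step): `P 0` is the singleton partition and for every
`r < n - 1`, `P (r+1)` is obtained from `P r` by a merge step. -/
def IsHACChain {n : ℕ} (d : Fin n → Fin n → ℝ) (P : ℕ → Finset (Finset (Fin n))) : Prop :=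
  P 0 = singletonPartition n ∧ ∀ r, r < n - 1 → IsMergeStep d (P r) (P (r + 1))

/-- `G` is a partition of `{1,…,n}` into `K₀` nonempty groups. -/
def IsGroupPartition {n K₀ : ℕ} (G : Fin K₀ → Finset (Fin n)) : Prop :=
  (∀ k, (G k).Nonempty) ∧ (∀ i : Fin n, ∃ k, i ∈ G k) ∧
    ∀ k k' : Fin K₀, k ≠ k' → Disjoint (G k) (G k')

/-- The partition `G` is `d`-separated: every within-group distance is strictly smaller
than every between-group distance (vacuously true when `K₀ = 1`). -/
def IsSeparated {n K₀ : ℕ} (d : Fin n → Fin n → ℝ) (G : Fin K₀ → Finset (Fin n)) : Prop :=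
  ∀ k : Fin K₀, ∀ i ∈ G k, ∀ j ∈ G k, i ≠ j →
    ∀ k₁ k₂ : Fin K₀, k₁ ≠ k₂ → ∀ a ∈ G k₁, ∀ b ∈ G k₂, d i j < d a b

/-- `A` is a refinement of `B`: every element of `A` is a subset of some element of `B`. -/
def IsRefinement {n : ℕ} (A B : Finset (Finset (Fin n))) : Prop :=
  ∀ C ∈ A, ∃ D ∈ B, C ⊆ D

def mergeBlocks {α : Type*} [DecidableEq α] (Q : Finset (Finset α)) (C C' : Finset α) :
    Finset (Finset α) :=
  insert (C ∪ C') ((Q.erase C).erase C')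

theorem mem_mergeBlocks {α : Type*} [DecidableEq α] {Q : Finset (Finset α)}
    {C C' D : Finset α} :
    D ∈ mergeBlocks Q C C' ↔ D = C ∪ C' ∨ (D ∈ Q ∧ D ≠ C ∧ D ≠ C') := by
  simp only [mergeBlocks, mem_insert, mem_erase]
  tauto

structure IsPartition {α : Type*} (Q : Finset (Finset α)) : Prop where
  nonempty : ∀ C ∈ Q, C.Nonempty
  exists_mem : ∀ a, ∃ C ∈ Q, a ∈ C
  disjoint : ∀ C ∈ Q, ∀ C' ∈ Q, C ≠ C' → Disjoint C C'

namespace IsPartition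

variable {α : Type*} {Q R : Finset (Finset α)} {C C' : Finset α}

theorem eq_of_mem_of_mem (hQ : IsPartition Q) {D : Finset α} (hC : C ∈ Q) (hD : D ∈ Q) {a : α}
    (haC : a ∈ C) (haD : a ∈ D) : C = D := by
  by_contra hne
  exact disjoint_left.mp (hQ.disjoint C hC D hD hne) haC haD

theorem eq_of_refines (hQ : IsPartition Q) (hR : IsPartition R)
    (href : ∀ C ∈ Q, ∃ D ∈ R, C ⊆ D) (hcard : #Q ≤ #R) : Q = R := by
  choose f hfR hf using href
  have hf_eq : ∀ C (hC : C ∈ Q), ∀ D ∈ R, ∀ a ∈ C, a ∈ D → f C hC = D :=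
    fun C hC D hD a haC haD => hR.eq_of_mem_of_mem (hfR C hC) hD (hf C hC haC) haD
  have hsurj : ∀ D ∈ R, ∃ C, ∃ (hC : C ∈ Q), f C hC = D := by
    intro D hD
    obtain ⟨a, ha⟩ := hR.nonempty D hD
    obtain ⟨C, hC, haC⟩ := hQ.exists_mem a
    exact ⟨C, hC, hf_eq C hC D hD a haC ha⟩
  have hinj := inj_on_of_surj_on_of_card_le f hfR hsurj hcard
  have hfix : ∀ C (hC : C ∈ Q), f C hC = C := by
    intro C hC
    refine ((hf C hC).antisymm fun a ha => ?_).symm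
    obtain ⟨C', hC', haC'⟩ := hQ.exists_mem a
    rwa [← hinj hC' hC (hf_eq C' hC' _ (hfR C hC) a haC' ha)]
  refine Subset.antisymm (fun C hC => hfix C hC ▸ hfR C hC) fun D hD => ?_
  obtain ⟨C, hC, rfl⟩ := hsurj D hD
  rwa [hfix C hC]

variable [DecidableEq α]

theorem card_mergeBlocks (hQ : IsPartition Q) (hC : C ∈ Q) (hC' : C' ∈ Q) (hne : C ≠ C') :
    #(mergeBlocks Q C C') + 1 = #Q := by
  have hnotMem : C ∪ C' ∉ (Q.erase C).erase C' := by
    intro h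
    obtain ⟨-, hne_C, hmem⟩ := mem_erase.mp h |>.imp_right mem_erase.mp
    obtain ⟨a, ha⟩ := hQ.nonempty C hC
    exact hne_C (hQ.eq_of_mem_of_mem hmem hC (mem_union_left _ ha) ha)
  have hcard : 1 < #Q := one_lt_card.mpr ⟨C, hC, C', hC', hne⟩
  rw [mergeBlocks, card_insert_of_notMem hnotMem,
    card_erase_of_mem (mem_erase.mpr ⟨hne.symm, hC'⟩), card_erase_of_mem hC]
  omega

theorem mergeBlocks (hQ : IsPartition Q) (hC : C ∈ Q) (hC' : C' ∈ Q) :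
    IsPartition (mergeBlocks Q C C') := by
  have hdisj_union : ∀ D ∈ Q, D ≠ C → D ≠ C' → Disjoint (C ∪ C') D := fun D hD h h' =>
    disjoint_union_left.mpr ⟨hQ.disjoint C hC D hD h.symm, hQ.disjoint C' hC' D hD h'.symm⟩
  refine ⟨fun D hD => ?_, fun a => ?_, fun D hD D' hD' hne => ?_⟩
  · rcases mem_mergeBlocks.mp hD with rfl | ⟨hD, -⟩
    · exact (hQ.nonempty C hC).mono subset_union_left
    · exact hQ.nonempty D hD
  · obtain ⟨D, hD, haD⟩ := hQ.exists_mem a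
    by_cases hDC : D = C
    · exact ⟨_, mem_insert_self _ _, mem_union_left _ (hDC ▸ haD)⟩
    by_cases hDC' : D = C'
    · exact ⟨_, mem_insert_self _ _, mem_union_right _ (hDC' ▸ haD)⟩
    exact ⟨D, mem_mergeBlocks.mpr (Or.inr ⟨hD, hDC, hDC'⟩), haD⟩
  · rcases mem_mergeBlocks.mp hD with rfl | ⟨hD, hDC, hDC'⟩ <;>
      rcases mem_mergeBlocks.mp hD' with rfl | ⟨hD', hD'C, hD'C'⟩
    · exact absurd rfl hne
    · exact hdisj_union D' hD' hD'C hD'C'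
    · exact (hdisj_union D hD hDC hDC').symm
    · exact hQ.disjoint D hD D' hD' hne

end IsPartition

theorem exists_ne_subset_of_card_lt {α ι : Type*} [Fintype ι] {Q : Finset (Finset α)}
    {G : ι → Finset α} (hQ : ∀ C ∈ Q, ∃ k, C ⊆ G k) (hcard : Fintype.card ι < #Q) :
    ∃ A ∈ Q, ∃ A' ∈ Q, A ≠ A' ∧ ∃ k, A ⊆ G k ∧ A' ⊆ G k := by
  obtain ⟨C, hC⟩ := card_pos.mp ((Nat.zero_le _).trans_lt hcard)
  have : Nonempty ι := ⟨(hQ C hC).choose⟩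
  choose! g hg using hQ
  obtain ⟨A, hA, A', hA', hne, hgA⟩ := exists_ne_map_eq_of_card_lt_of_maps_to
    (t := univ) (by rwa [card_univ]) fun C _ => mem_coe.mpr (mem_univ (g C))
  exact ⟨A, hA, A', hA', hne, g A, hg A hA, hgA ▸ hg A' hA'⟩

theorem cLink_eq_sup {n : ℕ} (d : Fin n → Fin n → ℝ) (S S' : Finset (Fin n)) :
    cLink d S S' = (S ×ˢ S').sup fun p => (d p.1 p.2 : EReal) := by
  rw [sup_eq_sSup_image, cLink]
  congr 1
  ext x
  simp only [Set.mem_ofPred_eq, coe_product, Set.mem_image, Set.mem_prod, mem_coe, Prod.exists]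
  grind

theorem cLink_lt_cLink {n : ℕ} {d : Fin n → Fin n → ℝ} {A A' C C' : Finset (Fin n)}
    {a b : Fin n} (ha : a ∈ C) (hb : b ∈ C') (h : ∀ i ∈ A, ∀ j ∈ A', d i j < d a b) :
    cLink d A A' < cLink d C C' := by
  rw [cLink_eq_sup, cLink_eq_sup]
  calc (A ×ˢ A').sup (fun p => (d p.1 p.2 : EReal)) < d a b :=
        (Finset.sup_lt_iff (EReal.bot_lt_coe _)).mpr fun p hp =>
          EReal.coe_lt_coe_iff.mpr (h p.1 (mem_product.mp hp).1 p.2 (mem_product.mp hp).2)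
    _ ≤ _ := le_sup (f := fun p => (d p.1 p.2 : EReal)) (b := (a, b))
      (mem_product.mpr ⟨ha, hb⟩)

theorem isPartition_singletonPartition (n : ℕ) : IsPartition (singletonPartition n) := by
  refine ⟨fun C hC => ?_,
    fun i => ⟨{i}, mem_image_of_mem _ (mem_univ i), mem_singleton_self i⟩,
    fun C hC C' hC' hne => ?_⟩
  · obtain ⟨i, -, rfl⟩ := mem_image.mp hC
    exact singleton_nonempty i
  · obtain ⟨i, -, rfl⟩ := mem_image.mp hC
    obtain ⟨j, -, rfl⟩ := mem_image.mp hC'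
    exact disjoint_singleton.mpr fun h => hne (h ▸ rfl)

theorem card_singletonPartition (n : ℕ) : #(singletonPartition n) = n := by
  rw [singletonPartition, card_image_of_injective _ singleton_injective, card_univ,
    Fintype.card_fin]

namespace IsGroupPartition

variable {n K₀ : ℕ} {G : Fin K₀ → Finset (Fin n)}

theorem isPartition_image (hG : IsGroupPartition G) : IsPartition (univ.image G) := by
  refine ⟨fun C hC => ?_, fun i => ?_, fun C hC C' hC' hne => ?_⟩
  · obtain ⟨k, -, rfl⟩ := mem_image.mp hC
    exact hG.1 k
  · obtain ⟨k, hk⟩ := hG.2.1 i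
    exact ⟨G k, mem_image_of_mem G (mem_univ k), hk⟩
  · obtain ⟨k, -, rfl⟩ := mem_image.mp hC
    obtain ⟨k', -, rfl⟩ := mem_image.mp hC'
    exact hG.2.2 k k' fun h => hne (h ▸ rfl)

theorem card_image (hG : IsGroupPartition G) : #(univ.image G) = K₀ := by
  refine (card_image_of_injective univ fun k k' h => ?_).trans (card_fin K₀)
  by_contra hne
  obtain ⟨i, hi⟩ := hG.1 k
  exact disjoint_left.mp (hG.2.2 k k' hne) hi (h ▸ hi)

end IsGroupPartition

structure IsPartitionRefining {n K₀ : ℕ} (G : Fin K₀ → Finset (Fin n))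
    (Q : Finset (Finset (Fin n))) : Prop extends IsPartition Q where
  subset_group : ∀ C ∈ Q, ∃ k, C ⊆ G k

section Separated

variable {n K₀ : ℕ} {d : Fin n → Fin n → ℝ} {G : Fin K₀ → Finset (Fin n)}
  {Q Q' : Finset (Finset (Fin n))}

theorem IsSeparated.exists_subset_group_of_forall_cLink_le (hsep : IsSeparated d G)
    (hQ : IsPartitionRefining G Q) (hcard : K₀ < #Q) {C C' : Finset (Fin n)}
    (hC : C ∈ Q) (hC' : C' ∈ Q)
    (hmin : ∀ D ∈ Q, ∀ D' ∈ Q, D ≠ D' → cLink d C C' ≤ cLink d D D') :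
    ∃ k, C ⊆ G k ∧ C' ⊆ G k := by
  obtain ⟨k₁, hk₁⟩ := hQ.subset_group C hC
  obtain ⟨k₂, hk₂⟩ := hQ.subset_group C' hC'
  obtain rfl | hk := eq_or_ne k₁ k₂
  · exact ⟨k₁, hk₁, hk₂⟩
  obtain ⟨A, hA, A', hA', hne, k, hAk, hA'k⟩ :=
    exists_ne_subset_of_card_lt hQ.subset_group (by rwa [Fintype.card_fin])
  obtain ⟨a, ha⟩ := hQ.nonempty C hC
  obtain ⟨b, hb⟩ := hQ.nonempty C' hC'
  have hlt : cLink d A A' < cLink d C C' := cLink_lt_cLink ha hb fun i hi j hj =>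
    hsep k i (hAk hi) j (hA'k hj) (fun h => disjoint_left.mp (hQ.disjoint A hA A' hA' hne) hi
      (h ▸ hj)) k₁ k₂ hk a (hk₁ ha) b (hk₂ hb)
  exact absurd (hmin A hA A' hA' hne) hlt.not_ge

theorem IsSeparated.isPartitionRefining_of_isMergeStep (hsep : IsSeparated d G)
    (hQ : IsPartitionRefining G Q) (hcard : K₀ < #Q) (hstep : IsMergeStep d Q Q') :
    IsPartitionRefining G Q' ∧ #Q' + 1 = #Q := by
  obtain ⟨C, hC, C', hC', hne, hmin, rfl⟩ := hstep
  obtain ⟨k, hCk, hC'k⟩ := hsep.exists_subset_group_of_forall_cLink_le hQ hcard hC hC' hmin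
  refine ⟨⟨hQ.mergeBlocks hC hC', fun D hD => ?_⟩, hQ.card_mergeBlocks hC hC' hne⟩
  rcases mem_mergeBlocks.mp hD with rfl | ⟨hD, -⟩
  · exact ⟨k, union_subset hCk hC'k⟩
  · exact hQ.subset_group D hD

end Separated

theorem IsHACChain.isPartitionRefining {n K₀ : ℕ} {d : Fin n → Fin n → ℝ}
    {G : Fin K₀ → Finset (Fin n)} (hG : IsGroupPartition G) (hsep : IsSeparated d G)
    (hK₀ : 0 < K₀) {P : ℕ → Finset (Finset (Fin n))} (hP : IsHACChain d P) :
    ∀ r ≤ n - K₀, IsPartitionRefining G (P r) ∧ #(P r) = n - r := by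
  intro r hr
  induction r with
  | zero =>
    rw [hP.1, card_singletonPartition]
    refine ⟨⟨isPartition_singletonPartition n, fun C hC => ?_⟩, rfl⟩
    obtain ⟨i, -, rfl⟩ := mem_image.mp hC
    obtain ⟨k, hk⟩ := hG.2.1 i
    exact ⟨k, singleton_subset_iff.mpr hk⟩
  | succ r ih =>
    obtain ⟨hQ, hcard⟩ := ih (by omega)
    obtain ⟨hQ', hcard'⟩ :=
      hsep.isPartitionRefining_of_isMergeStep hQ (by omega) (hP.2 r (by omega))
    exact ⟨hQ', by omega⟩

theorem hac_exact_recovery_general {n K₀ : ℕ} (hn : 1 ≤ n)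
    (d : Fin n → Fin n → ℝ)
    (G : Fin K₀ → Finset (Fin n)) (hG : IsGroupPartition G)
    (hsep : IsSeparated d G)
    (P : ℕ → Finset (Finset (Fin n))) (hP : IsHACChain d P) :
    P (n - K₀) = Finset.univ.image G := by
  have hK₀ : 0 < K₀ := (hG.2.1 ⟨0, hn⟩).choose.pos
  obtain ⟨hQ, hcard⟩ := hP.isPartitionRefining hG hsep hK₀ (n - K₀) le_rfl
  refine hQ.eq_of_refines hG.isPartition_image (fun C hC => ?_) ?_
  · obtain ⟨k, hk⟩ := hQ.subset_group C hC
    exact ⟨G k, mem_image_of_mem G (mem_univ k), hk⟩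
  · rw [hcard, hG.card_image]
    omega

/-- **Deterministic core of Theorem 1(a).** If the group partition is `d`-separated, then
for every run of the complete-linkage HAC algorithm (i.e. every tie-breaking), the HAC
partition into `K₀` clusters equals the group partition. -/
theorem hac_exact_recovery {n K₀ : ℕ} (hn : 1 ≤ n)
    (d : Fin n → Fin n → ℝ) (hsym : ∀ i j, d i j = d j i)
    (G : Fin K₀ → Finset (Fin n)) (hG : IsGroupPartition G)
    (hsep : IsSeparated d G)
    (P : ℕ → Finset (Finset (Fin n))) (hP : IsHACChain d P) :
    P (n - K₀) = Finset.univ.image G :=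
  hac_exact_recovery_general hn d G hG hsep P hP
end

section
/- Deterministic core of Theorem 1(b) (refinement for K > K₀): Let n ≥ 1 be an integer, d : {1,…,n}² → ℝ symmetric, and let {G₁,…,G_{K₀}} be a partition of {1,…,n} into K₀ nonempty groups that is d-separated. Then, for every choice of tie-breaking at each step and for every integer K with K₀ < K ≤ n, the HAC partition P^{n−K} into K clusters is a refinement of {G₁,…,G_{K₀}}. -/
open Finset

/-! A complete-linkage merge never joins two clusters lying in different groups while more than
`K₀` clusters remain: by pigeonhole two distinct clusters `D, D'` then lie in one group, and
separation makes `Δ(D, D')`, a within-group distance, smaller than every between-group distance,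
so a pair of clusters from different groups cannot attain the minimum of `Δ`. Hence, as long as
more than `K₀` clusters remain, every cluster stays inside a group. -/

section Linkage

variable {n : ℕ} (d : Fin n → Fin n → ℝ)

lemma le_cLink {S S' : Finset (Fin n)} {i j : Fin n} (hi : i ∈ S) (hj : j ∈ S') :
    (d i j : EReal) ≤ cLink d S S' :=
  le_sSup ⟨i, hi, j, hj, rfl⟩

lemma exists_cLink_eq {S S' : Finset (Fin n)} (hS : S.Nonempty) (hS' : S'.Nonempty) :
    ∃ i ∈ S, ∃ j ∈ S', cLink d S S' = d i j := by
  set s := {x : EReal | ∃ i ∈ S, ∃ j ∈ S', x = d i j}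
  have hfin : s.Finite :=
    (Set.finite_range fun p : Fin n × Fin n => (d p.1 p.2 : EReal)).subset
      (by rintro _ ⟨i, -, j, -, rfl⟩; exact ⟨(i, j), rfl⟩)
  obtain ⟨i, hi⟩ := hS
  obtain ⟨j, hj⟩ := hS'
  obtain ⟨i', hi', j', hj', h⟩ := Set.Nonempty.csSup_mem (s := s) ⟨_, i, hi, j, hj, rfl⟩ hfin
  exact ⟨i', hi', j', hj', h⟩

end Linkage

section Merge

variable {α : Type*} [DecidableEq α] {P : Finset (Finset α)} {C C' : Finset α}

lemma union_notMem_erase_erase (hne : ∀ A ∈ P, A.Nonempty)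
    (hdisj : (P : Set (Finset α)).PairwiseDisjoint id) (hC : C ∈ P) :
    C ∪ C' ∉ (P.erase C).erase C' := by
  intro h
  have hmem : C ∪ C' ∈ P.erase C := mem_of_mem_erase h
  obtain ⟨i, hi⟩ := hne C hC
  exact disjoint_left.mp (hdisj (mem_of_mem_erase hmem) hC (ne_of_mem_erase hmem))
    (mem_union_left _ hi) hi

lemma card_insert_union_erase_erase (hne : ∀ A ∈ P, A.Nonempty)
    (hdisj : (P : Set (Finset α)).PairwiseDisjoint id) (hC : C ∈ P) (hC' : C' ∈ P)
    (hCC' : C ≠ C') :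
    (insert (C ∪ C') ((P.erase C).erase C')).card = P.card - 1 := by
  have htwo : 1 < P.card := one_lt_card.mpr ⟨C, hC, C', hC', hCC'⟩
  rw [card_insert_of_notMem (union_notMem_erase_erase hne hdisj hC),
    card_erase_of_mem (mem_erase.mpr ⟨hCC'.symm, hC'⟩), card_erase_of_mem hC]
  omega

lemma pairwiseDisjoint_insert_union_erase_erase
    (hdisj : (P : Set (Finset α)).PairwiseDisjoint id) (hC : C ∈ P) (hC' : C' ∈ P) :
    ((insert (C ∪ C') ((P.erase C).erase C') : Finset (Finset α)) : Set (Finset α)).PairwiseDisjoint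
      id := by
  have hrest : ∀ A ∈ (P.erase C).erase C', Disjoint (C ∪ C') A := fun A hA => by
    obtain ⟨hAC', hAC, hA⟩ : A ≠ C' ∧ A ≠ C ∧ A ∈ P := by simpa using hA
    exact disjoint_union_left.mpr ⟨hdisj hC hA (Ne.symm hAC), hdisj hC' hA (Ne.symm hAC')⟩
  rw [coe_insert]
  refine (hdisj.subset ?_).insert fun A hA _ => hrest A hA
  exact coe_subset.mpr ((erase_subset _ _).trans (erase_subset _ _))

end Merge

structure IsClusteringWithin {α ι : Type*} (G : ι → Finset α) (P : Finset (Finset α)) : Prop where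
  nonempty : ∀ C ∈ P, C.Nonempty
  pairwiseDisjoint : (P : Set (Finset α)).PairwiseDisjoint id
  exists_subset_group : ∀ C ∈ P, ∃ k, C ⊆ G k

lemma isClusteringWithin_singletonPartition {n : ℕ} {ι : Type*} {G : ι → Finset (Fin n)}
    (hcover : ∀ i, ∃ k, i ∈ G k) :
    IsClusteringWithin G (singletonPartition n) where
  nonempty := by simp [singletonPartition]
  pairwiseDisjoint := by
    rintro _ hA _ hB hAB
    simp only [singletonPartition, coe_image, coe_univ, Set.image_univ, Set.mem_range] at hA hB
    obtain ⟨i, rfl⟩ := hA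
    obtain ⟨j, rfl⟩ := hB
    exact disjoint_singleton.mpr fun h => hAB (h ▸ rfl)
  exists_subset_group := by
    simp only [singletonPartition, mem_image, mem_univ, true_and, forall_exists_index,
      forall_apply_eq_imp_iff, singleton_subset_iff]
    exact hcover

namespace IsClusteringWithin

variable {α ι : Type*} {G : ι → Finset α} {P : Finset (Finset α)}

lemma exists_ne_subset_group_of_card_lt [Fintype ι] (h : IsClusteringWithin G P)
    (hcard : Fintype.card ι < P.card) :
    ∃ D ∈ P, ∃ D' ∈ P, D ≠ D' ∧ ∃ k, D ⊆ G k ∧ D' ⊆ G k := by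
  choose f hf using h.exists_subset_group
  obtain ⟨⟨D, hD⟩, ⟨D', hD'⟩, hne, heq⟩ :=
    Fintype.exists_ne_map_eq_of_card_lt (fun C : P => f C.1 C.2) (by simpa using hcard)
  exact ⟨D, hD, D', hD', fun h => hne (Subtype.ext h), _, hf D hD, heq ▸ hf D' hD'⟩

lemma merge [DecidableEq α] (h : IsClusteringWithin G P) {C C' : Finset α} (hC : C ∈ P)
    (hC' : C' ∈ P) {k : ι} (hk : C ∪ C' ⊆ G k) :
    IsClusteringWithin G (insert (C ∪ C') ((P.erase C).erase C')) where
  nonempty := by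
    simp only [mem_insert, forall_eq_or_imp]
    exact ⟨(h.nonempty C hC).mono subset_union_left,
      fun A hA => h.nonempty A (mem_of_mem_erase (mem_of_mem_erase hA))⟩
  pairwiseDisjoint := pairwiseDisjoint_insert_union_erase_erase h.pairwiseDisjoint hC hC'
  exists_subset_group := by
    simp only [mem_insert, forall_eq_or_imp]
    exact ⟨⟨k, hk⟩,
      fun A hA => h.exists_subset_group A (mem_of_mem_erase (mem_of_mem_erase hA))⟩

end IsClusteringWithin

namespace IsClusteringWithin

variable {n K₀ : ℕ} {d : Fin n → Fin n → ℝ} {G : Fin K₀ → Finset (Fin n)}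
  {P Q : Finset (Finset (Fin n))}

lemma exists_union_subset_group_of_cLink_le (h : IsClusteringWithin G P) (hsep : IsSeparated d G)
    (hcard : K₀ < P.card) {C C' : Finset (Fin n)} (hC : C ∈ P) (hC' : C' ∈ P)
    (hmin : ∀ D ∈ P, ∀ D' ∈ P, D ≠ D' → cLink d C C' ≤ cLink d D D') :
    ∃ k, C ∪ C' ⊆ G k := by
  obtain ⟨k₁, hk₁⟩ := h.exists_subset_group C hC
  obtain ⟨k₂, hk₂⟩ := h.exists_subset_group C' hC'
  suffices k₁ = k₂ from ⟨k₁, union_subset hk₁ (this ▸ hk₂)⟩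
  by_contra hk
  obtain ⟨D, hD, D', hD', hDD', k, hDk, hD'k⟩ :=
    h.exists_ne_subset_group_of_card_lt (by simpa using hcard)
  obtain ⟨i, hi, j, hj, hij⟩ := exists_cLink_eq d (h.nonempty D hD) (h.nonempty D' hD')
  have hne : i ≠ j := fun he =>
    disjoint_left.mp (h.pairwiseDisjoint hD hD' hDD') hi (he ▸ hj)
  obtain ⟨a, ha⟩ := h.nonempty C hC
  obtain ⟨b, hb⟩ := h.nonempty C' hC'
  have hlt : d i j < d a b := hsep k i (hDk hi) j (hD'k hj) hne k₁ k₂ hk a (hk₁ ha) b (hk₂ hb)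
  have : (d a b : EReal) ≤ d i j :=
    calc (d a b : EReal) ≤ cLink d C C' := le_cLink d ha hb
      _ ≤ cLink d D D' := hmin D hD D' hD' hDD'
      _ = d i j := hij
  exact absurd (EReal.coe_le_coe_iff.mp this) (not_le.mpr hlt)

lemma isMergeStep (h : IsClusteringWithin G P) (hsep : IsSeparated d G) (hcard : K₀ < P.card)
    (hstep : IsMergeStep d P Q) :
    IsClusteringWithin G Q ∧ Q.card = P.card - 1 := by
  obtain ⟨C, hC, C', hC', hCC', hmin, rfl⟩ := hstep
  obtain ⟨k, hk⟩ := h.exists_union_subset_group_of_cLink_le hsep hcard hC hC' hmin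
  exact ⟨h.merge hC hC' hk,
    card_insert_union_erase_erase h.nonempty h.pairwiseDisjoint hC hC' hCC'⟩

end IsClusteringWithin

lemma IsHACChain.isClusteringWithin {n K₀ : ℕ} {d : Fin n → Fin n → ℝ}
    {G : Fin K₀ → Finset (Fin n)} {P : ℕ → Finset (Finset (Fin n))} (hP : IsHACChain d P)
    (hcover : ∀ i, ∃ k, i ∈ G k) (hsep : IsSeparated d G) :
    ∀ r, K₀ + r < n → IsClusteringWithin G (P r) ∧ (P r).card = n - r
  | 0, _ => by
    rw [hP.1, singletonPartition, card_image_of_injective _ singleton_injective]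
    exact ⟨isClusteringWithin_singletonPartition hcover, by simp⟩
  | r + 1, hr => by
    obtain ⟨h, hcard⟩ := hP.isClusteringWithin hcover hsep r (by omega)
    obtain ⟨h', hcard'⟩ := h.isMergeStep hsep (by omega) (hP.2 r (by omega))
    exact ⟨h', by omega⟩

theorem hac_refinement_above_general {n K₀ : ℕ}
    (d : Fin n → Fin n → ℝ)
    (G : Fin K₀ → Finset (Fin n)) (hG : IsGroupPartition G)
    (hsep : IsSeparated d G)
    (P : ℕ → Finset (Finset (Fin n))) (hP : IsHACChain d P)
    (K : ℕ) (hK₁ : K₀ < K) (hK₂ : K ≤ n) :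
    IsRefinement (P (n - K)) (Finset.univ.image G) := by
  obtain ⟨h, -⟩ := hP.isClusteringWithin hG.2.1 hsep (n - K) (by omega)
  intro C hC
  obtain ⟨k, hk⟩ := h.exists_subset_group C hC
  exact ⟨G k, mem_image_of_mem G (mem_univ k), hk⟩

/-- **Deterministic core of Theorem 1(b).** If the group partition is `d`-separated, then
for every tie-breaking and every integer `K` with `K₀ < K ≤ n`, the HAC partition into
`K` clusters is a refinement of the group partition. -/
theorem hac_refinement_above {n K₀ : ℕ} (hn : 1 ≤ n)
    (d : Fin n → Fin n → ℝ) (hsym : ∀ i j, d i j = d j i)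
    (G : Fin K₀ → Finset (Fin n)) (hG : IsGroupPartition G)
    (hsep : IsSeparated d G)
    (P : ℕ → Finset (Finset (Fin n))) (hP : IsHACChain d P)
    (K : ℕ) (hK₁ : K₀ < K) (hK₂ : K ≤ n) :
    IsRefinement (P (n - K)) (Finset.univ.image G) :=
  hac_refinement_above_general d G hG hsep P hP K hK₁ hK₂
end
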